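/- With fₙ = −1 + 2·(Fib₁ + Fib₂ + ... + Fib_{n+2}) and Fₙ = 2 + 4·(Fib₁·Fib₂ + Fib₂·Fib₃ + ... + Fibₙ·Fib_{n+1}), one has lim_{n→∞} fₙ²/Fₙ = φ⁶, where φ = (1+√5)/2. (This is Equation (4): the Eisenstein isoperimetric ratio of the golden ratio satisfies η(φ⁻¹) = φ⁶.) -/

import Mathlib

open Filter

/-- The golden ratio `φ = (1 + √5)/2`. -/
noncomputable def phi : ℝ := (1 + Real.sqrt 5) / 2

/-- The fold count of the continued fraction coloring `C(Fibₙ + Fib_{n+1} α)`: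
`fₙ = -1 + 2 ∑_{k=1}^{n+2} Fib_k`. -/
def foldCount (n : ℕ) : ℤ := -1 + 2 * ∑ k ∈ Finset.Icc 1 (n + 2), (Nat.fib k : ℤ)

/-- The number of faces of the triangulation `T(Fibₙ + Fib_{n+1} α)`:
`Fₙ = 2 + 4 ∑_{k=1}^{n} Fib_k Fib_{k+1}`. -/
def faceCount (n : ℕ) : ℕ := 2 + 4 * ∑ k ∈ Finset.Icc 1 n, Nat.fib k * Nat.fib (k + 1)

/-
Both counts reduce to single Fibonacci numbers: `∑_{k ≤ m} Fib_k = Fib_{m+2} - 1` gives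
`fₙ = 2 Fib_{n+4} - 3`, and Cassini's identity gives `Fₙ = 4 Fib_{n+1}² - 2 (-1)ⁿ`.
By Binet's formula `Fib_n / φⁿ → 1/√5`, so after dividing `fₙ` by `φⁿ` and `Fₙ` by `φ²ⁿ`
the ratio tends to `(2 φ⁴/√5)² / (4 φ²/5) = φ⁶`.
-/

open Topology Real goldenRatio

theorem tendsto_sq_div_of_tendsto_div {α 𝕜 : Type*} [NormedField 𝕜] {l : Filter α}
    {a b c : α → 𝕜} {A B : 𝕜} (hc : ∀ x, c x ≠ 0) (ha : Tendsto (fun x ↦ a x / c x) l (𝓝 A))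
    (hb : Tendsto (fun x ↦ b x / c x ^ 2) l (𝓝 B)) (hB : B ≠ 0) :
    Tendsto (fun x ↦ a x ^ 2 / b x) l (𝓝 (A ^ 2 / B)) :=
  ((ha.pow 2).div hb hB).congr fun x ↦ by
    change (a x / c x) ^ 2 / (b x / c x ^ 2) = _
    rw [div_pow, div_div_div_cancel_right₀ (pow_ne_zero 2 (hc x))]

theorem sum_Icc_fib_add_one (m : ℕ) : ∑ k ∈ Finset.Icc 1 m, Nat.fib k + 1 = Nat.fib (m + 2) := by
  rw [Nat.fib_succ_eq_succ_sum, Finset.sum_range_succ', Nat.fib_zero, add_zero,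
    Finset.range_eq_Ico, Finset.sum_Ico_add' Nat.fib]
  rfl

-- Cassini's identity, from `(Fib_{n+1} - φ Fib_n) (Fib_{n+1} - ψ Fib_n) = ψⁿ φⁿ`.
theorem coe_fib_succ_sq_sub_fib_mul_fib_succ_sub_fib_sq (n : ℕ) :
    (Nat.fib (n + 1) : ℝ) ^ 2 - Nat.fib n * Nat.fib (n + 1) - Nat.fib n ^ 2 = (-1) ^ n := by
  have h := congrArg₂ (· * ·) (fib_succ_sub_goldenRatio_mul_fib n)
    (fib_succ_sub_goldenConj_mul_fib n)
  rw [← mul_pow, mul_comm ψ φ, goldenRatio_mul_goldenConj] at h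
  rw [← h]
  linear_combination (Nat.fib n * Nat.fib (n + 1) : ℝ) * goldenRatio_add_goldenConj
    - (Nat.fib n : ℝ) ^ 2 * goldenRatio_mul_goldenConj

theorem two_mul_sum_Icc_fib_mul_fib_succ (n : ℕ) :
    2 * ∑ k ∈ Finset.Icc 1 n, (Nat.fib k * Nat.fib (k + 1) : ℝ)
      = 2 * Nat.fib (n + 1) ^ 2 - 1 - (-1) ^ n := by
  induction n with
  | zero => norm_num
  | succ n ih =>
    have hfib : (Nat.fib (n + 2) : ℝ) = Nat.fib n + Nat.fib (n + 1) := mod_cast Nat.fib_add_two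
    rw [Finset.sum_Icc_succ_top (by omega), mul_add, ih, hfib]
    linear_combination 2 * coe_fib_succ_sq_sub_fib_mul_fib_succ_sub_fib_sq n

theorem coe_foldCount (n : ℕ) : (foldCount n : ℝ) = 2 * Nat.fib (n + 4) - 3 := by
  have h : ((∑ k ∈ Finset.Icc 1 (n + 2), Nat.fib k : ℕ) : ℝ) + 1 = Nat.fib (n + 4) :=
    mod_cast sum_Icc_fib_add_one (n + 2)
  rw [foldCount]
  push_cast at h ⊢
  linarith

theorem coe_faceCount (n : ℕ) : (faceCount n : ℝ) = 4 * Nat.fib (n + 1) ^ 2 - 2 * (-1) ^ n := by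
  rw [faceCount]
  push_cast
  linarith [two_mul_sum_Icc_fib_mul_fib_succ n]

theorem abs_goldenConj_div_goldenRatio_lt_one : |ψ / φ| < 1 := by
  rw [abs_div, abs_of_pos goldenRatio_pos, div_lt_one goldenRatio_pos, abs_lt]
  constructor <;> linarith [neg_one_lt_goldenConj, goldenConj_neg, one_lt_goldenRatio]

theorem tendsto_goldenConj_div_goldenRatio_pow :
    Tendsto (fun n : ℕ ↦ (ψ / φ) ^ n) atTop (𝓝 0) :=
  tendsto_pow_atTop_nhds_zero_of_abs_lt_one abs_goldenConj_div_goldenRatio_lt_one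

theorem tendsto_fib_div_goldenRatio_pow :
    Tendsto (fun n ↦ (Nat.fib n : ℝ) / φ ^ n) atTop (𝓝 (1 / √5)) := by
  have h := (tendsto_goldenConj_div_goldenRatio_pow.const_sub 1).div_const √5
  rw [sub_zero] at h
  refine h.congr fun n ↦ ?_
  rw [coe_fib_eq, div_pow]
  field_simp

theorem tendsto_fib_add_div_goldenRatio_pow (k : ℕ) :
    Tendsto (fun n ↦ (Nat.fib (n + k) : ℝ) / φ ^ n) atTop (𝓝 (φ ^ k / √5)) := by
  have h := (tendsto_fib_div_goldenRatio_pow.comp (tendsto_add_atTop_nat k)).const_mul (φ ^ k)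
  rw [mul_one_div] at h
  refine h.congr fun n ↦ ?_
  simp only [Function.comp_apply, pow_add]
  field_simp

theorem tendsto_foldCount_div_goldenRatio_pow :
    Tendsto (fun n ↦ (foldCount n : ℝ) / φ ^ n) atTop (𝓝 (2 * φ ^ 4 / √5)) := by
  have hinv : Tendsto (fun n : ℕ ↦ φ⁻¹ ^ n) atTop (𝓝 0) :=
    tendsto_pow_atTop_nhds_zero_of_lt_one (by positivity)
      (inv_lt_one_of_one_lt₀ one_lt_goldenRatio)
  have h := ((tendsto_fib_add_div_goldenRatio_pow 4).const_mul 2).sub (hinv.const_mul 3)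
  rw [mul_zero, sub_zero, ← mul_div_assoc] at h
  refine h.congr fun n ↦ ?_
  rw [coe_foldCount, inv_pow]
  field_simp

theorem tendsto_faceCount_div_goldenRatio_pow_sq :
    Tendsto (fun n ↦ (faceCount n : ℝ) / (φ ^ n) ^ 2) atTop (𝓝 (4 * φ ^ 2 / 5)) := by
  have h := (((tendsto_fib_add_div_goldenRatio_pow 1).pow 2).const_mul 4).sub
    (tendsto_goldenConj_div_goldenRatio_pow.const_mul 2)
  rw [mul_zero, sub_zero, pow_one, div_pow, sq_sqrt (by norm_num), ← mul_div_assoc] at h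
  refine h.congr fun n ↦ ?_
  rw [coe_faceCount, ← goldenRatio_mul_goldenConj]
  -- `φ` and `ψ` are abbreviations, which `field_simp` would unfold into `(1 ± √5) / 2`.
  have hφ := goldenRatio_ne_zero
  generalize φ = x at hφ ⊢
  generalize ψ = y
  simp only [div_pow, mul_pow]
  field_simp

theorem stmt10 :
    Tendsto (fun n : ℕ => ((foldCount n : ℝ)) ^ 2 / (faceCount n : ℝ)) atTop
      (nhds (phi ^ 6)) := by
  have hlim := tendsto_sq_div_of_tendsto_div (fun n ↦ pow_ne_zero n goldenRatio_ne_zero)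
    tendsto_foldCount_div_goldenRatio_pow tendsto_faceCount_div_goldenRatio_pow_sq
    (by positivity)
  convert hlim using 2
  show φ ^ 6 = _
  have h5 : √5 ^ 2 = 5 := sq_sqrt (by norm_num)
  have hφ := goldenRatio_ne_zero
  generalize φ = x at hφ ⊢
  field_simp
  rw [h5]
  ring
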